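/- If the random function values {g(RE) : R ∈ R} are almost surely distinct and E is sign-symmetric, then the randomization test that rejects when p(E) ≤ k/2^n has rejection probability exactly k/2^n, for any integer 0 ≤ k ≤ 2^n. -/

import Mathlib

/-!
Let `T(M) = #{R | g M ≤ g (R M)}` over the sign matrices `R`, so that `p(E) ≤ k / 2^n` iff
`T(E) ≤ k`. Since the sign matrices form a group, `T(R E)` is the rank, counted from the top, of
`g (R E)` among the values `g (R' E)`; when these are distinct, exactly `k` of the `2^n` matrices
`R` satisfy `T(R E) ≤ k`. Sign-symmetry makes `P(T(R E) ≤ k)` independent of `R`, so averaging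
over `R` gives `2^n P(T(E) ≤ k) = k`.
-/

open MeasureTheory Matrix
open scoped ENNReal

instance matrixMeasurableSpace (m k : Type*) : MeasurableSpace (Matrix m k ℝ) :=
  MeasurableSpace.pi

noncomputable def signMat {n : ℕ} (s : Fin n → Bool) : Matrix (Fin n) (Fin n) ℝ :=
  Matrix.diagonal fun i => if s i then (1 : ℝ) else -1

open Finset

section UpperRank

variable {α β : Type*} [Fintype α] [LinearOrder β]

def upperRank (f : α → β) (a : α) : ℕ := #{b | f a ≤ f b}

variable {f : α → β}

lemma upperRank_lt_upperRank {a b : α} (h : f a < f b) : upperRank f b < upperRank f a := by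
  refine card_lt_card ((ssubset_iff_of_subset fun c hc => ?_).2 ⟨a, ?_, ?_⟩)
  · simp only [mem_filter, mem_univ, true_and] at hc ⊢
    exact h.le.trans hc
  · simp
  · simpa using h

lemma upperRank_injective (hf : Function.Injective f) : Function.Injective (upperRank f) := by
  intro a b hab
  rcases lt_trichotomy (f a) (f b) with h | h | h
  · exact absurd hab (upperRank_lt_upperRank h).ne'
  · exact hf h
  · exact absurd hab (upperRank_lt_upperRank h).ne

lemma upperRank_mem_Icc (a : α) : upperRank f a ∈ Icc 1 (Fintype.card α) :=
  mem_Icc.2 ⟨card_pos.2 ⟨a, by simp⟩, (card_filter_le _ _).trans_eq card_univ⟩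

lemma image_upperRank (hf : Function.Injective f) :
    univ.image (upperRank f) = Icc 1 (Fintype.card α) :=
  eq_of_subset_of_card_le (fun _ hx => by
      obtain ⟨a, -, rfl⟩ := mem_image.1 hx
      exact upperRank_mem_Icc a)
    (by rw [card_image_of_injective _ (upperRank_injective hf), card_univ, Nat.card_Icc]; omega)

lemma card_upperRank_le (hf : Function.Injective f) {k : ℕ} (hk : k ≤ Fintype.card α) :
    #{a | upperRank f a ≤ k} = k := by
  rw [← card_image_of_injective _ (upperRank_injective hf), ← filter_image (p := (· ≤ k)),
    image_upperRank hf]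
  rw [show {x ∈ Icc 1 (Fintype.card α) | x ≤ k} = Icc 1 k by ext; simp; omega, Nat.card_Icc]
  omega

end UpperRank

lemma card_mul_measure_preimage_eq_of_map_eq {ι Ω β : Type*} [Fintype ι] [MeasurableSpace Ω]
    [MeasurableSpace β] {P : Measure Ω} [IsProbabilityMeasure P] {X : Ω → β} (hX : Measurable X)
    {φ : ι → β → β} (hφ : ∀ i, Measurable (φ i)) (hinv : ∀ i, P.map (φ i ∘ X) = P.map X)
    {A : Set β} [DecidablePred (· ∈ A)] (hA : MeasurableSet A) {k : ℕ}
    (hk : ∀ᵐ ω ∂P, #{i | φ i (X ω) ∈ A} = k) :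
    Fintype.card ι * P (X ⁻¹' A) = k := by
  have hpre (i : ι) : MeasurableSet ((φ i ∘ X) ⁻¹' A) := ((hφ i).comp hX) hA
  calc (Fintype.card ι : ℝ≥0∞) * P (X ⁻¹' A)
      = ∑ i, P ((φ i ∘ X) ⁻¹' A) := by
        simp only [← Measure.map_apply ((hφ _).comp hX) hA, hinv, Measure.map_apply hX hA,
          sum_const, card_univ, nsmul_eq_mul]
    _ = ∫⁻ ω, ∑ i, ((φ i ∘ X) ⁻¹' A).indicator 1 ω ∂P := by
        rw [lintegral_finsetSum _ fun i _ => measurable_one.indicator (hpre i)]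
        simp only [lintegral_indicator_one (hpre _)]
    _ = ∫⁻ _, (k : ℝ≥0∞) ∂P := lintegral_congr_ae <| hk.mono fun ω hω => by
        classical
        simp [← hω, Set.indicator_apply]
    _ = k := by simp

section SignMatrix

variable {n p : ℕ}

lemma signMat_mul_signMat (s r : Fin n → Bool) :
    signMat s * signMat r = signMat fun i => s i == r i := by
  rw [signMat, signMat, diagonal_mul_diagonal, signMat]
  congr 1 with i
  cases s i <;> cases r i <;> norm_num

lemma measurable_signMat_mul (s : Fin n → Bool) :
    Measurable fun M : Matrix (Fin n) (Fin p) ℝ => signMat s * M := by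
  refine measurable_pi_lambda _ fun i => measurable_pi_lambda _ fun j => ?_
  have hentry : Measurable fun M : Matrix (Fin n) (Fin p) ℝ => M i j :=
    (measurable_pi_apply j).comp (measurable_pi_apply i)
  simpa only [signMat, diagonal_mul] using hentry.const_mul _

/- Without the type ascription on `s`, the product below would elaborate with the
multiplication of the type synonym `CStarMatrix`. -/
noncomputable def signRank (g : Matrix (Fin n) (Fin p) ℝ → ℝ) (M : Matrix (Fin n) (Fin p) ℝ) :
    ℕ :=
  #{s : Fin n → Bool | g M ≤ g (signMat s * M)}

lemma measurable_signRank {g : Matrix (Fin n) (Fin p) ℝ → ℝ} (hg : Measurable g) :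
    Measurable (signRank g) := by
  have hsum : signRank g = fun M => ∑ s : Fin n → Bool,
      if g M ≤ g (signMat s * M) then 1 else 0 :=
    funext fun M => card_filter _ _
  rw [hsum]
  exact Finset.measurable_sum _ fun s _ => Measurable.ite
    (measurableSet_le hg (hg.comp (measurable_signMat_mul s))) measurable_const measurable_const

lemma signRank_signMat_mul (g : Matrix (Fin n) (Fin p) ℝ → ℝ) (r : Fin n → Bool)
    (M : Matrix (Fin n) (Fin p) ℝ) :
    signRank g (signMat r * M) = upperRank (fun s => g (signMat s * M)) r := by
  have hinvol : Function.Involutive fun (s : Fin n → Bool) i => s i == r i :=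
    fun s => funext fun i => by dsimp only; cases s i <;> cases r i <;> rfl
  refine card_bijective _ hinvol.bijective fun s => ?_
  simp only [mem_filter, mem_univ, true_and, ← Matrix.mul_assoc, signMat_mul_signMat]

end SignMatrix

/-- If the values {g(RE) : R} are almost surely distinct and E is sign-symmetric,
then the randomization test rejecting when p(E) ≤ k/2^n has rejection probability
exactly k/2^n, for any integer 0 ≤ k ≤ 2^n. -/
theorem randomization_test_exact_size
    {Ω : Type*} [MeasurableSpace Ω] (P : Measure Ω) [IsProbabilityMeasure P]
    {n p : ℕ} (E : Ω → Matrix (Fin n) (Fin p) ℝ) (hE : Measurable E)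
    (hinv : ∀ s : Fin n → Bool, P.map (fun ω => signMat s * E ω) = P.map E)
    (g : Matrix (Fin n) (Fin p) ℝ → ℝ) (hg : Measurable g)
    (hdistinct : ∀ᵐ ω ∂P, Function.Injective (fun s : Fin n → Bool => g (signMat s * E ω)))
    (pval : Ω → ℝ)
    (hpval : ∀ ω, pval ω =
      ((Finset.univ.filter fun s : Fin n → Bool =>
          g (E ω) ≤ g (signMat s * E ω)).card : ℝ) / 2 ^ n)
    (k : ℕ) (hk : k ≤ 2 ^ n) :
    P {ω | pval ω ≤ (k : ℝ) / 2 ^ n} = (k : ℝ≥0∞) / 2 ^ n := by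
  have hevent : {ω | pval ω ≤ (k : ℝ) / 2 ^ n} = E ⁻¹' {M | signRank g M ≤ k} := by
    ext ω
    simp only [Set.mem_ofPred_eq, Set.mem_preimage, hpval, signRank]
    rw [div_le_div_iff_of_pos_right (by positivity), Nat.cast_le]
  have hcount :
      ∀ᵐ ω ∂P, #{r : Fin n → Bool | signMat r * E ω ∈ {M | signRank g M ≤ k}} = k := by
    filter_upwards [hdistinct] with ω hω
    simp only [signRank_signMat_mul]
    exact card_upperRank_le hω (by simpa using hk)
  have hA : MeasurableSet {M | signRank g M ≤ k} := measurable_signRank hg measurableSet_Iic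
  have hsize := card_mul_measure_preimage_eq_of_map_eq hE (φ := fun s M => signMat s * M)
    measurable_signMat_mul hinv hA hcount
  rw [hevent, ENNReal.eq_div_iff (by positivity) (by simp)]
  simpa using hsize
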